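/- arXiv:2308.04237 — 2 statements merged into one kernel-verified Lean document; each statement's English description precedes it below -/
import Mathlib

section
/- Let s_1,...,s_{N+1} be exchangeable real-valued random variables (e.g., i.i.d.). Let Q be the ceil((1-alpha)(N+1))-th smallest value among s_1,...,s_N if alpha >= 1/(N+1), and Q = +infinity (or the maximum possible score) otherwise. Then Pr(s_{N+1} <= Q) >= 1 - alpha. -/
open MeasureTheory Finset
open scoped ENNReal

/-!
Call an index `j` low if fewer than `k = ⌈(1-α)(N+1)⌉` of the scores lie strictly below `s j`.
Among any `N + 1` reals at least `k` indices are low, and by exchangeability every index is low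
with the same probability, so the test index is low with probability at least `k / (N + 1)`,
which is at least `1 - α`. When the test index is low, at most `k - 1` calibration scores lie
strictly below the test score, so it is at most the `k`-th smallest calibration score.
-/

section StrictRank

variable {ι α : Type*} [Fintype ι] [LinearOrder α]

def strictRank (v : ι → α) (j : ι) : ℕ := #{i | v i < v j}

theorem le_card_strictRank_lt (v : ι → α) {k : ℕ} (hk : k ≤ Fintype.card ι) :
    k ≤ #{j | strictRank v j < k} := by
  by_contra! hlt
  have hsplit := card_filter_add_card_filter_not (s := univ) (strictRank v · < k)
  rw [card_univ] at hsplit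
  obtain ⟨j, hj, hmin⟩ := exists_min_image {j | ¬strictRank v j < k} v
    (by rw [← card_pos]; omega)
  have hrank : k ≤ strictRank v j := by simpa using hj
  -- `j` has the least value outside the set, so everything strictly below `v j` lies inside it.
  have hsub : ({i | v i < v j} : Finset ι) ⊆ ({i | strictRank v i < k} : Finset ι) :=
      fun i hi => by
    by_contra hi'
    exact (hmin i (by simpa using hi')).not_gt (mem_filter.1 hi).2
  exact (hrank.trans (card_le_card hsub)).not_gt hlt

theorem strictRank_comp_perm (v : ι → α) (σ : Equiv.Perm ι) (j : ι) :
    strictRank (v ∘ σ) j = strictRank v (σ j) :=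
  card_equiv σ fun i => by simp

theorem strictRank_last {n : ℕ} (v : Fin (n + 1) → α) :
    strictRank v (Fin.last n) = #{i : Fin n | v i.castSucc < v (Fin.last n)} := by
  rw [strictRank, card_filter, card_filter, Fin.sum_univ_castSucc]
  simp

theorem List.SortedLE.le_getElem_of_countP_le {L : List α} (hL : L.SortedLE) {m : ℕ}
    (hm : m < L.length) {x : α} (h : L.countP (· < x) ≤ m) : x ≤ L[m] := by
  by_contra! hx
  have hprefix : ∀ a ∈ L.take (m + 1), a < x := by
    intro a ha
    obtain ⟨i, hi, rfl⟩ := List.mem_iff_getElem.1 ha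
    rw [List.getElem_take]
    exact (hL.getElem_le_getElem_of_le (by rw [List.length_take] at hi; omega)).trans_lt hx
  have hcount := (L.take_sublist (m + 1)).countP_le (p := (· < x))
  rw [List.countP_eq_length.2 (by simpa using hprefix), List.length_take] at hcount
  omega

theorem le_getD_sort_map_of_card_lt_le (w : ι → α) {x : α} {m : ℕ} (hm : m < Fintype.card ι)
    (h : #{i | w i < x} ≤ m) (d : α) :
    x ≤ ((univ.val.map w).sort (· ≤ ·)).getD m d := by
  have hlen : ((univ.val.map w).sort (· ≤ ·)).length = Fintype.card ι := by simp
  rw [List.getD_eq_getElem _ _ (hlen ▸ hm)]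
  refine (Multiset.pairwise_sort _ _).sortedLE.le_getElem_of_countP_le _ ?_
  rwa [← Multiset.coe_countP, Multiset.sort_eq, Multiset.countP_map]

theorem le_getD_sort_of_strictRank_last_lt {n k : ℕ} (v : Fin (n + 1) → α)
    (hrank : strictRank v (Fin.last n) < k) (hk : k ≤ n) (d : α) :
    v (Fin.last n) ≤
      ((univ.val.map fun i : Fin n => v i.castSucc).sort (· ≤ ·)).getD (k - 1) d :=
  le_getD_sort_map_of_card_lt_le _ (by rw [Fintype.card_fin]; omega) (by rw [strictRank_last] at hrank; omega) d

end StrictRank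

def Exchangeable {Ω ι β : Type*} [MeasurableSpace Ω] [MeasurableSpace β] (μ : Measure Ω)
    (X : Ω → ι → β) : Prop :=
  ∀ σ : Equiv.Perm ι, μ.map (fun ω i => X ω (σ i)) = μ.map X

section Exchangeable

variable {Ω ι : Type*} [MeasurableSpace Ω] [Fintype ι] {μ : Measure Ω}

theorem measurableSet_strictRank_lt (j : ι) (k : ℕ) :
    MeasurableSet {v : ι → ℝ | strictRank v j < k} := by
  have hrank : Measurable fun v : ι → ℝ => strictRank v j := by
    simp only [strictRank, card_filter]
    exact Finset.measurable_sum _ fun i _ => Measurable.ite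
      (measurableSet_lt (measurable_pi_apply i) (measurable_pi_apply j))
      measurable_const measurable_const
  exact hrank (measurableSet_Iio (a := k))

theorem Exchangeable.measure_strictRank_lt_eq {X : Ω → ι → ℝ} (hX : Measurable X)
    (hexch : Exchangeable μ X) (k : ℕ) (i j : ι) :
    μ {ω | strictRank (X ω) i < k} = μ {ω | strictRank (X ω) j < k} := by
  classical
  set σ := Equiv.swap i j
  have hXσ : Measurable fun ω l => X ω (σ l) :=
    measurable_pi_lambda _ fun l => (measurable_pi_apply _).comp hX
  calc μ {ω | strictRank (X ω) i < k}
      = μ ((fun ω l => X ω (σ l)) ⁻¹' {v | strictRank v j < k}) := by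
        congr 1
        ext ω
        simp [σ, ← Function.comp_def, strictRank_comp_perm]
    _ = μ.map X {v | strictRank v j < k} := by
        rw [← Measure.map_apply hXσ (measurableSet_strictRank_lt j k), hexch σ]
    _ = μ {ω | strictRank (X ω) j < k} := Measure.map_apply hX (measurableSet_strictRank_lt j k)

theorem Exchangeable.div_card_le_measure_strictRank_lt [IsProbabilityMeasure μ]
    {X : Ω → ι → ℝ} (hX : Measurable X) (hexch : Exchangeable μ X) {k : ℕ}
    (hk : k ≤ Fintype.card ι) (j : ι) :
    (k : ℝ≥0∞) / Fintype.card ι ≤ μ {ω | strictRank (X ω) j < k} := by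
  set E : ι → Set Ω := fun i => {ω | strictRank (X ω) i < k}
  have hE : ∀ i, MeasurableSet (E i) := fun i => hX (measurableSet_strictRank_lt i k)
  refine ENNReal.div_le_of_le_mul ?_
  calc (k : ℝ≥0∞) = ∫⁻ _, (k : ℝ≥0∞) ∂μ := by simp
    _ ≤ ∫⁻ ω, ∑ i, (E i).indicator 1 ω ∂μ := lintegral_mono fun ω => by
        simpa [E, Set.indicator_apply, sum_boole] using le_card_strictRank_lt (X ω) hk
    _ = ∑ i, μ (E i) := by
        rw [lintegral_finsetSum _ fun i _ => measurable_one.indicator (hE i)]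
        simp only [lintegral_indicator_one (hE _)]
    _ = μ (E j) * Fintype.card ι := by
        simp [E, hexch.measure_strictRank_lt_eq hX k _ j, mul_comm]

end Exchangeable

theorem ENNReal.ofReal_le_natCeil_mul_div {n : ℕ} (hn : n ≠ 0) (x : ℝ) :
    ENNReal.ofReal x ≤ (⌈x * n⌉₊ : ℝ≥0∞) / n := by
  have hn' : (0 : ℝ) < n := by positivity
  calc ENNReal.ofReal x ≤ ENNReal.ofReal (⌈x * n⌉₊ / n) :=
        ENNReal.ofReal_le_ofReal ((le_div_iff₀ hn').2 (Nat.le_ceil _))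
    _ = (⌈x * n⌉₊ : ℝ≥0∞) / n := by
        rw [ENNReal.ofReal_div_of_pos hn', ENNReal.ofReal_natCast, ENNReal.ofReal_natCast]

/-- Split conformal prediction coverage guarantee: for exchangeable scores
`s 0, …, s N`, the probability that the test score `s N` is at most the
`⌈(1-α)(N+1)⌉`-th smallest of the calibration scores `s 0, …, s (N-1)` (taken to be
`+∞` when `α < 1/(N+1)`) is at least `1 - α`. -/
theorem conformal_coverage {Ω : Type*} [MeasurableSpace Ω] (μ : Measure Ω)
    [IsProbabilityMeasure μ] (N : ℕ) (α : ℝ) (hα : 0 ≤ α)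
    (s : Fin (N + 1) → Ω → ℝ) (hmeas : ∀ i, Measurable (s i))
    (hexch : ∀ σ : Equiv.Perm (Fin (N + 1)),
      μ.map (fun ω => fun i => s (σ i) ω) = μ.map (fun ω => fun i => s i ω)) :
    ENNReal.ofReal (1 - α) ≤
      μ {ω | (↑(s (Fin.last N) ω) : EReal) ≤
        (if 1 / ((N : ℝ) + 1) ≤ α then
          ((((Finset.univ.val.map (fun i : Fin N => s i.castSucc ω)).sort (· ≤ ·)).getD
            ((⌈(1 - α) * ((N : ℝ) + 1)⌉).toNat - 1) 0 : ℝ) : EReal)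
        else (⊤ : EReal))} := by
  by_cases hcal : 1 / ((N : ℝ) + 1) ≤ α
  · set k := ⌈(1 - α) * ((N : ℝ) + 1)⌉₊
    have hkN : k ≤ N := Nat.ceil_le.2 <| by
      rw [div_le_iff₀ (by positivity)] at hcal
      linarith
    calc ENNReal.ofReal (1 - α) ≤ (k : ℝ≥0∞) / Fintype.card (Fin (N + 1)) := by
          simpa using ENNReal.ofReal_le_natCeil_mul_div N.succ_ne_zero (1 - α)
      _ ≤ μ {ω | strictRank (fun i => s i ω) (Fin.last N) < k} :=
          Exchangeable.div_card_le_measure_strictRank_lt (measurable_pi_lambda _ hmeas) hexch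
            (by rw [Fintype.card_fin]; omega) _
      _ ≤ _ := measure_mono fun ω hω => by
          simp only [if_pos hcal, Int.ceil_toNat, Set.mem_ofPred_eq, EReal.coe_le_coe_iff]
          exact le_getD_sort_of_strictRank_last_lt _ hω hkN 0
  · simp only [if_neg hcal, le_top, Set.ofPred_true, measure_univ]
    exact ENNReal.ofReal_le_one.2 (by linarith)
end

section
/- Let S = {s_1,...,s_N} be a multiset of values taken among quantization levels S_1 < S_2 < ... < S_M, and let p_m be the fraction of elements of S equal to S_m. Define p^+ = (N/(N+1)) p + (0,...,0, 1/(N+1)) in R^M. Then the ceil((1-alpha)(N+1))-th smallest element of S (when alpha >= 1/(N+1)) equals S_{m_alpha(p^+)}, where m_alpha(p^+) = min{ m : p^+_1 + ... + p^+_m >= 1 - alpha }. -/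
/-!
The `k`-th smallest score is the least level `m` at which the cumulative count
`#{j | sc j ≤ m}` reaches `k`. Under `p⁺` the cumulative mass up to `m` is
`(#{j | sc j ≤ m} + [m is the top level]) / (N + 1)`, so `1 - α` is reached exactly when that
numerator reaches `k = ⌈(1 - α)(N + 1)⌉`. The fictitious atom only changes the numerator at the
top level, where the count is already `N ≥ k` because `α ≥ 1 / (N + 1)`.
-/

open Finset

theorem List.SortedLE.getElem_le_iff_lt_countP {α : Type*} [LinearOrder α] {l : List α}
    (hl : l.SortedLE) {j : ℕ} (hj : j < l.length) (a : α) :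
    l[j] ≤ a ↔ j < l.countP (· ≤ a) := by
  constructor
  · intro hja
    have hprefix : (l.take (j + 1)).countP (· ≤ a) = j + 1 := by
      rw [List.countP_eq_length.mpr, List.length_take_of_le hj]
      intro b hb
      obtain ⟨i, hi, rfl⟩ := List.getElem_of_mem hb
      simp only [List.length_take] at hi
      rw [List.getElem_take, decide_eq_true_eq]
      exact (hl.getElem_le_getElem_of_le (by omega)).trans hja
    have := (List.take_sublist (j + 1) l).countP_le (p := (· ≤ a))
    omega
  · intro hlt
    by_contra! hja
    have hsuffix : (l.drop j).countP (· ≤ a) = 0 := by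
      rw [List.countP_eq_zero]
      intro b hb
      obtain ⟨i, hi, rfl⟩ := List.getElem_of_mem hb
      rw [List.getElem_drop, decide_eq_true_eq, not_le]
      exact hja.trans_le (hl.getElem_le_getElem_of_le (by omega))
    have hsplit := congrArg (List.countP (· ≤ a)) (List.take_append_drop j l)
    rw [List.countP_append, hsuffix] at hsplit
    have := (l.take j).countP_le_length (p := (· ≤ a))
    simp only [List.length_take] at this
    omega

section OrderStatistic

variable {ι α : Type*} [Fintype ι] [LinearOrder α]

theorem countP_sort_map_univ (f : ι → α) (a : α) :
    ((univ.val.map f).sort).countP (· ≤ a) = #{i | f i ≤ a} := by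
  rw [← Multiset.coe_countP, Multiset.sort_eq, Multiset.countP_map, card_def, filter_val]

theorem sort_map_univ_getElem_le_iff (f : ι → α) {j : ℕ}
    (hj : j < ((univ.val.map f).sort).length) (a : α) :
    ((univ.val.map f).sort)[j] ≤ a ↔ j < #{i | f i ≤ a} := by
  rw [← countP_sort_map_univ]
  exact (Multiset.pairwise_sort _ _).sortedLE.getElem_le_iff_lt_countP hj a

theorem isLeast_sort_map_univ_getElem (f : ι → α) {j : ℕ}
    (hj : j < ((univ.val.map f).sort).length) :
    IsLeast {a | j < #{i | f i ≤ a}} ((univ.val.map f).sort)[j] := by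
  have hset : {a | j < #{i | f i ≤ a}} = Set.Ici ((univ.val.map f).sort)[j] :=
    Set.ext fun a => (sort_map_univ_getElem_le_iff f hj a).symm
  rw [hset]
  exact isLeast_Ici

end OrderStatistic

section Augmented

variable {N M : ℕ}

noncomputable def augmentedEmpirical (sc : Fin N → Fin M) (m : Fin M) : ℝ :=
  ((N : ℝ) / ((N : ℝ) + 1)) * (((univ.filter (fun i => sc i = m)).card : ℝ) / N) +
    (if (m : ℕ) = M - 1 then 1 / ((N : ℝ) + 1) else 0)

theorem sum_filter_le_augmentedEmpirical (hN : N ≠ 0) (sc : Fin N → Fin M) (m : Fin M) :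
    ∑ i ∈ univ.filter (· ≤ m), augmentedEmpirical sc i =
      ((#{j | sc j ≤ m} + if (m : ℕ) = M - 1 then 1 else 0 : ℕ) : ℝ) / (N + 1) := by
  have hcount : ∑ i ∈ univ.filter (· ≤ m), (#{j | sc j = i} : ℝ) = #{j | sc j ≤ m} := by
    rw [← Nat.cast_sum, sum_card_fiberwise_eq_card_filter]
    simp only [mem_filter, mem_univ, true_and]
  have hatom : ∑ i ∈ univ.filter (· ≤ m), (if (i : ℕ) = M - 1 then 1 / ((N : ℝ) + 1) else 0) =
      if (m : ℕ) = M - 1 then 1 / ((N : ℝ) + 1) else 0 := by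
    refine sum_eq_single_of_mem m (by simp) fun i hi him => if_neg ?_
    have : i < m := lt_of_le_of_ne (by simpa using hi) him
    omega
  simp only [augmentedEmpirical, sum_add_distrib, ← mul_sum, ← sum_div, hcount, hatom]
  have : (N : ℝ) ≠ 0 := by exact_mod_cast hN
  split_ifs
  · push_cast
    field_simp
  · push_cast
    field_simp
    ring

theorem ceil_one_sub_mul_succ_le {α : ℝ} (hα : 1 / ((N : ℝ) + 1) ≤ α) :
    ⌈(1 - α) * ((N : ℝ) + 1)⌉₊ ≤ N := by
  rw [div_le_iff₀ (by positivity)] at hα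
  rw [Nat.ceil_le]
  linarith

theorem one_sub_le_sum_augmentedEmpirical_iff {α : ℝ} (hα1 : 1 / ((N : ℝ) + 1) ≤ α)
    (hα2 : α < 1) (sc : Fin N → Fin M) (m : Fin M) :
    1 - α ≤ ∑ i ∈ univ.filter (· ≤ m), augmentedEmpirical sc i ↔
      ⌈(1 - α) * ((N : ℝ) + 1)⌉₊ ≤ #{j | sc j ≤ m} := by
  have hN : N ≠ 0 := by
    rintro rfl
    norm_num at hα1
    linarith
  rw [sum_filter_le_augmentedEmpirical hN, le_div_iff₀ (by positivity), ← Nat.ceil_le]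
  split_ifs with hm
  · have hall : #{j | sc j ≤ m} = N := by
      rw [filter_true_of_mem fun j _ => Fin.le_def.mpr (by omega), card_univ, Fintype.card_fin]
    have := ceil_one_sub_mul_succ_le hα1
    omega
  · rfl

end Augmented

theorem quantile_eq_empirical_distribution_quantile_general
    (N M : ℕ) (α : ℝ)
    (hα1 : 1 / ((N : ℝ) + 1) ≤ α) (hα2 : α < 1)
    (L : Fin M → ℝ) (hL : StrictMono L) (sc : Fin N → Fin M)
    (p : Fin M → ℝ)
    (hp : ∀ m, p m = ((Finset.univ.filter (fun i => sc i = m)).card : ℝ) / N)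
    (pPlus : Fin M → ℝ)
    (hpPlus : ∀ m, pPlus m = ((N : ℝ) / ((N : ℝ) + 1)) * p m +
      (if (m : ℕ) = M - 1 then 1 / ((N : ℝ) + 1) else 0))
    (mα : Fin M)
    (hmα : IsLeast {m : Fin M |
      1 - α ≤ ∑ i ∈ Finset.univ.filter (· ≤ m), pPlus i} mα) :
    ((Finset.univ.val.map (fun i : Fin N => L (sc i))).sort (· ≤ ·)).getD
      ((⌈(1 - α) * ((N : ℝ) + 1)⌉).toNat - 1) 0 = L mα := by
  obtain rfl : pPlus = augmentedEmpirical sc := funext fun m => by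
    rw [hpPlus, hp, augmentedEmpirical]
  set k := ⌈(1 - α) * ((N : ℝ) + 1)⌉₊
  have hk : 0 < k := Nat.ceil_pos.mpr (mul_pos (by linarith) (by positivity))
  have hkN : k ≤ N := ceil_one_sub_mul_succ_le hα1
  set scores := (univ.val.map sc).sort
  have hlen : k - 1 < scores.length := by
    rw [Multiset.length_sort, Multiset.card_map, card_val, card_univ, Fintype.card_fin]
    omega
  have hlevels : scores.map L = (univ.val.map fun i => L (sc i)).sort := by
    rw [Multiset.map_sort L _ _ _ fun a _ b _ => hL.le_iff_le.symm, Multiset.map_map]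
    rfl
  have hmα_eq : mα = scores[k - 1] := by
    refine hmα.unique ?_
    convert isLeast_sort_map_univ_getElem sc hlen using 1
    ext m
    rw [Set.mem_ofPred_eq, Set.mem_ofPred_eq, one_sub_le_sum_augmentedEmpirical_iff hα1 hα2]
    omega
  rw [Int.ceil_toNat, ← hlevels, List.getD_eq_getElem _ _ (by rwa [List.length_map]), List.getElem_map,
    hmα_eq]

/-- The `⌈(1-α)(N+1)⌉`-th smallest element of a multiset of `N` quantized scores
(with levels `L 0 < L 1 < … < L (M-1)`) equals `L m_α(p⁺)`, where `p⁺` is the empirical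
distribution augmented by one fictitious score at the maximum level, and
`m_α(p⁺) = min { m : p⁺_1 + ⋯ + p⁺_m ≥ 1 - α }`. -/
theorem quantile_eq_empirical_distribution_quantile
    (N M : ℕ) (hN : 0 < N) (hM : 0 < M) (α : ℝ)
    (hα1 : 1 / ((N : ℝ) + 1) ≤ α) (hα2 : α < 1)
    (L : Fin M → ℝ) (hL : StrictMono L) (sc : Fin N → Fin M)
    (p : Fin M → ℝ)
    (hp : ∀ m, p m = ((Finset.univ.filter (fun i => sc i = m)).card : ℝ) / N)
    (pPlus : Fin M → ℝ)
    (hpPlus : ∀ m, pPlus m = ((N : ℝ) / ((N : ℝ) + 1)) * p m +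
      (if (m : ℕ) = M - 1 then 1 / ((N : ℝ) + 1) else 0))
    (mα : Fin M)
    (hmα : IsLeast {m : Fin M |
      1 - α ≤ ∑ i ∈ Finset.univ.filter (· ≤ m), pPlus i} mα) :
    ((Finset.univ.val.map (fun i : Fin N => L (sc i))).sort (· ≤ ·)).getD
      ((⌈(1 - α) * ((N : ℝ) + 1)⌉).toNat - 1) 0 = L mα :=
  quantile_eq_empirical_distribution_quantile_general N M α hα1 hα2 L hL sc p hp pPlus hpPlus mα hmα
end
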